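/- For every positive integer K there exists a K-arc-connected tournament D with no bipartition (V1, V2) of its vertex set such that the induced subdigraphs D⟨V1⟩, D⟨V2⟩ and the bipartite subdigraph D[V1,V2] are all strongly connected. -/
import Mathlib


/-- A digraph is strong if every vertex reaches every other vertex. -/
def IsStrong {V : Type*} (D : V → V → Prop) : Prop :=
  ∀ u v : V, Relation.ReflTransGen D u v

/-- Strong connectivity of the subdigraph induced on a vertex subset `S`. -/
def IsStrongOn {V : Type*} (D : V → V → Prop) (S : Set V) : Prop :=
  ∀ u ∈ S, ∀ v ∈ S, Relation.ReflTransGen (fun a b => D a b ∧ a ∈ S ∧ b ∈ S) u v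

/-- A tournament: loopless, and exactly one arc between any two distinct vertices. -/
def IsTournament {V : Type*} (D : V → V → Prop) : Prop :=
  (∀ v, ¬ D v v) ∧ ∀ u v : V, u ≠ v → (D u v ↔ ¬ D v u)

/-- `k`-arc-connectivity: every nonempty proper vertex set has out-degree at least `k`. -/
def IsKArcConnected {V : Type*} (D : V → V → Prop) (k : ℕ) : Prop :=
  ∀ X : Set V, X.Nonempty → X ≠ Set.univ →
    k ≤ {p : V × V | D p.1 p.2 ∧ p.1 ∈ X ∧ p.2 ∉ X}.ncard

namespace Stmt14

open Finset

variable {n : ℕ}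

open Classical in
/-- number of arcs of `D` from `S` to `T`. -/
noncomputable def ec (D : Fin n → Fin n → Prop) (S T : Finset (Fin n)) : ℕ :=
  ((S ×ˢ T).filter fun p => D p.1 p.2).card

open Classical in
/-- out-degree of `u`. -/
noncomputable def odeg (D : Fin n → Fin n → Prop) (u : Fin n) : ℕ :=
  (Finset.univ.filter fun v => D u v).card

lemma ec_swap (D : Fin n → Fin n → Prop) (S T : Finset (Fin n)) :
    ec (fun u v => D v u) T S = ec D S T := by
  classical
  unfold ec
  apply Finset.card_nbij' (fun p => (p.2, p.1)) (fun p => (p.2, p.1)) <;>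
    intro p hp <;> simp_all [Finset.mem_filter, Finset.mem_product]

lemma ec_split (D : Fin n → Fin n → Prop) (S : Finset (Fin n)) :
    ec D S Finset.univ = ec D S Sᶜ + ec D S S := by
  classical
  unfold ec
  have h := Finset.card_filter_add_card_filter_not
    (s := (S ×ˢ Finset.univ).filter fun p : Fin n × Fin n => D p.1 p.2)
    (p := fun p : Fin n × Fin n => p.2 ∈ S)
  have h1 : (((S ×ˢ Finset.univ).filter fun p : Fin n × Fin n => D p.1 p.2).filter
      fun p : Fin n × Fin n => p.2 ∈ S) = (S ×ˢ S).filter fun p => D p.1 p.2 := by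
    ext p; simp [Finset.mem_filter, Finset.mem_product]; tauto
  have h2 : (((S ×ˢ Finset.univ).filter fun p : Fin n × Fin n => D p.1 p.2).filter
      fun p : Fin n × Fin n => ¬ p.2 ∈ S) = (S ×ˢ Sᶜ).filter fun p => D p.1 p.2 := by
    ext p; simp [Finset.mem_filter, Finset.mem_product]; tauto
  rw [h1, h2] at h
  omega

lemma ec_out (D : Fin n → Fin n → Prop) (S : Finset (Fin n)) (k : ℕ)
    (hdeg : ∀ u, k ≤ odeg D u) : S.card * k ≤ ec D S Finset.univ := by
  classical
  unfold ec
  rw [Finset.card_filter, Finset.sum_product]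
  calc S.card * k = ∑ _u ∈ S, k := by rw [Finset.sum_const, smul_eq_mul]
    _ ≤ _ := Finset.sum_le_sum fun u _ => by
        have := hdeg u
        unfold odeg at this
        rw [Finset.card_filter] at this
        convert this using 2
    _ = _ := rfl

lemma ec_inner (D : Fin n → Fin n → Prop) (hT : IsTournament D) (S : Finset (Fin n)) :
    2 * ec D S S ≤ S.card * S.card - S.card := by
  classical
  have hswap : ec D S S = ((S ×ˢ S).filter fun p : Fin n × Fin n => D p.2 p.1).card := by
    unfold ec
    apply Finset.card_nbij' (fun p => (p.2, p.1)) (fun p => (p.2, p.1)) <;>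
      intro p hp <;> simp_all [Finset.mem_filter, Finset.mem_product]
  have hdisj : Disjoint ((S ×ˢ S).filter fun p : Fin n × Fin n => D p.1 p.2)
      ((S ×ˢ S).filter fun p : Fin n × Fin n => D p.2 p.1) := by
    rw [Finset.disjoint_left]
    rintro ⟨p1, p2⟩ h1 h2
    simp only [Finset.mem_filter, Finset.mem_product] at h1 h2
    by_cases hpq : p1 = p2
    · subst hpq; exact hT.1 p1 h1.2
    · exact ((hT.2 p1 p2 hpq).mp h1.2) h2.2
  have hsub : (((S ×ˢ S).filter fun p : Fin n × Fin n => D p.1 p.2) ∪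
      ((S ×ˢ S).filter fun p : Fin n × Fin n => D p.2 p.1)) ⊆ S.offDiag := by
    intro p hp
    simp only [Finset.mem_union, Finset.mem_filter, Finset.mem_product] at hp
    rw [Finset.mem_offDiag]
    have hne : p.1 ≠ p.2 := by
      intro h
      rcases hp with ⟨_, h'⟩ | ⟨_, h'⟩
      · rw [h] at h'; exact hT.1 p.2 h'
      · rw [h] at h'; exact hT.1 p.1 (h ▸ h')
    tauto
  have hcard := Finset.card_le_card hsub
  rw [Finset.card_union_of_disjoint hdisj, Finset.offDiag_card] at hcard
  have hba : ((S ×ˢ S).filter fun p : Fin n × Fin n => D p.1 p.2).card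
      = ((S ×ˢ S).filter fun p : Fin n × Fin n => D p.2 p.1).card := hswap
  unfold ec
  omega

lemma cross_ge (D : Fin n → Fin n → Prop) (K : ℕ) (hT : IsTournament D)
    (hdeg : ∀ u, K + 1 ≤ odeg D u)
    (S : Finset (Fin n)) (h1 : 1 ≤ S.card) (h2 : S.card ≤ 2 * K + 2) :
    K ≤ ec D S Sᶜ := by
  have e1 := ec_split D S
  have e2 := ec_out D S (K + 1) hdeg
  have e3 := ec_inner D hT S
  obtain ⟨s, hs⟩ : ∃ s, S.card = s + 1 := ⟨S.card - 1, by omega⟩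
  rw [hs] at e2 e3 h2
  have hss : s * s ≤ s * (2 * K + 1) := Nat.mul_le_mul_left s (by omega)
  have e3' : 2 * ec D S S ≤ (s + 1) * s := by
    have : (s + 1) * (s + 1) - (s + 1) = (s + 1) * s := by
      rw [Nat.mul_succ]; omega
    omega
  nlinarith [e1, e2, e3', hss]

lemma flip_tournament (D : Fin n → Fin n → Prop) (hT : IsTournament D) :
    IsTournament (fun u v => D v u) := by
  refine ⟨fun v => hT.1 v, fun u v huv => ?_⟩
  have := hT.2 v u (Ne.symm huv)
  have h2 := hT.2 u v huv
  tauto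

lemma ncard_eq_ec (D : Fin n → Fin n → Prop) (X : Set (Fin n)) (Xf : Finset (Fin n))
    (hXf : ∀ v, v ∈ Xf ↔ v ∈ X) :
    {p : Fin n × Fin n | D p.1 p.2 ∧ p.1 ∈ X ∧ p.2 ∉ X}.ncard = ec D Xf Xfᶜ := by
  unfold ec
  rw [← Set.ncard_coe_finset]
  congr 1
  ext ⟨u, v⟩
  simp only [Finset.coe_filter, Finset.mem_product, Finset.mem_compl, hXf,
    Set.mem_setOf_eq, Set.mem_sep_iff]
  tauto

lemma karc (K : ℕ) (D : Fin (4 * K + 3) → Fin (4 * K + 3) → Prop) (hT : IsTournament D)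
    (hout : ∀ u, K + 1 ≤ odeg D u) (hin : ∀ u, K + 1 ≤ odeg (fun a b => D b a) u) :
    IsKArcConnected D K := by
  intro X hne hproper
  classical
  set Xf := X.toFinite.toFinset with hXfdef
  have hmem : ∀ v, v ∈ Xf ↔ v ∈ X := fun v => Set.Finite.mem_toFinset _
  rw [ncard_eq_ec D X Xf hmem]
  have hcard1 : 1 ≤ Xf.card := by
    obtain ⟨v, hv⟩ := hne
    exact Finset.card_pos.mpr ⟨v, (hmem v).mpr hv⟩
  have hcardn : Xf.card ≤ 4 * K + 2 := by
    by_contra h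
    push_neg at h
    have hle : Xf.card ≤ Fintype.card (Fin (4 * K + 3)) := Finset.card_le_univ Xf
    rw [Fintype.card_fin] at hle
    have : Xf.card = Fintype.card (Fin (4 * K + 3)) := by rw [Fintype.card_fin]; omega
    have huniv : Xf = Finset.univ := Finset.card_eq_iff_eq_univ Xf |>.mp this
    apply hproper
    ext v
    simp only [Set.mem_univ, iff_true]
    exact (hmem v).mp (huniv ▸ Finset.mem_univ v)
  rcases le_or_gt Xf.card (2 * K + 2) with h | h
  · exact cross_ge D K hT hout Xf hcard1 h
  · rw [← ec_swap D Xf Xfᶜ]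
    have hcc : Xf = Xfᶜᶜ := (compl_compl Xf).symm
    have hcompl : Xfᶜ.card = 4 * K + 3 - Xf.card := by
      rw [Finset.card_compl, Fintype.card_fin]
    have := cross_ge (fun u v => D v u) K (flip_tournament D hT) hin Xfᶜ
      (by omega) (by omega)
    rwa [← hcc] at this

/-- circulant rule: `a → b` iff `b` is among the next `K` positions cyclically. -/
def circ (K a b : ℕ) : Prop := (a < b ∧ b - a ≤ K) ∨ (b < a ∧ K + 1 ≤ a - b)

/-- the big digraph, on values: A = [0, 2K+1), B = [2K+1, 4K+2), x = 4K+2;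
all arcs A → B, B → x, x → A, circulant tournaments inside A and B. -/
def bigd (K a b : ℕ) : Prop :=
  if a < 2 * K + 1 then
    (if b < 2 * K + 1 then circ K a b else b < 4 * K + 2)
  else if a < 4 * K + 2 then
    (if b < 2 * K + 1 then False else if b < 4 * K + 2 then circ K a b else True)
  else b < 2 * K + 1

def bigD (K : ℕ) (u v : Fin (4 * K + 3)) : Prop := bigd K u.val v.val

lemma bigD_tournament (K : ℕ) : IsTournament (bigD K) := by
  constructor
  · intro v
    show ¬ bigd K v.val v.val
    unfold bigd circ
    split_ifs <;> first | trivial | omega |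
      (simp only [not_true, not_false_iff, true_iff, iff_true, false_iff, iff_false, not_not]; omega)
  · intro u v huv
    have hne : u.val ≠ v.val := fun h => huv (Fin.ext h)
    have hu := u.isLt
    have hv := v.isLt
    show bigd K u.val v.val ↔ ¬ bigd K v.val u.val
    unfold bigd circ
    split_ifs <;> first | trivial | omega |
      (simp only [not_true, not_false_iff, true_iff, iff_true, false_iff, iff_false, not_not]; omega)

lemma deg_ge {n : ℕ} (D : Fin n → Fin n → Prop) (u : Fin n) (k : ℕ) (F : ℕ → Fin n)
    (hR : ∀ j ∈ Finset.Icc 1 k, D u (F j))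
    (hinj : Set.InjOn F ↑(Finset.Icc 1 k)) : k ≤ odeg D u := by
  unfold odeg
  have hc : ((Finset.Icc 1 k).image F).card = k := by
    rw [Finset.card_image_of_injOn hinj, Nat.card_Icc]
    omega
  calc k = ((Finset.Icc 1 k).image F).card := hc.symm
    _ ≤ _ := Finset.card_le_card (by
        intro v hv
        simp only [Finset.mem_image] at hv
        obtain ⟨j, hj, rfl⟩ := hv
        simp only [Finset.mem_filter, Finset.mem_univ, true_and]
        exact hR j hj)

lemma bigD_outdeg (K : ℕ) (u : Fin (4 * K + 3)) : K + 1 ≤ odeg (bigD K) u := by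
  have hu := u.isLt
  rcases lt_or_ge u.val (2 * K + 1) with h1 | h1
  · -- u in A : all of B is dominated
    apply deg_ge (bigD K) u (K + 1) (fun j => ⟨2 * K + min j (K + 1), by omega⟩)
    · intro j hj
      simp only [Finset.mem_Icc] at hj
      show bigd K u.val (2 * K + min j (K + 1))
      unfold bigd circ
      split_ifs <;> first | trivial | omega
    · intro j hj j' hj' h
      simp only [Finset.coe_Icc, Set.mem_Icc] at hj hj'
      have h2 : 2 * K + min j (K + 1) = 2 * K + min j' (K + 1) := congrArg Fin.val h
      omega
  rcases lt_or_ge u.val (4 * K + 2) with h2 | h2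
  · -- u in B : K successors in B plus x
    apply deg_ge (bigD K) u (K + 1) (fun j =>
      ⟨if j = K + 1 then 4 * K + 2 else
        if u.val + j < 4 * K + 2 then u.val + j else u.val - (2 * K + 1 - j),
       by split_ifs <;> omega⟩)
    · intro j hj
      simp only [Finset.mem_Icc] at hj
      show bigd K u.val (if j = K + 1 then 4 * K + 2 else
        if u.val + j < 4 * K + 2 then u.val + j else u.val - (2 * K + 1 - j))
      unfold bigd circ
      split_ifs <;> first | trivial | omega
    · intro j hj j' hj' h
      simp only [Finset.coe_Icc, Set.mem_Icc] at hj hj'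
      have h3 : (if j = K + 1 then 4 * K + 2 else
          if u.val + j < 4 * K + 2 then u.val + j else u.val - (2 * K + 1 - j))
          = (if j' = K + 1 then 4 * K + 2 else
          if u.val + j' < 4 * K + 2 then u.val + j' else u.val - (2 * K + 1 - j')) :=
        congrArg Fin.val h
      split_ifs at h3 <;> omega
  · -- u = x : all of A is dominated
    apply deg_ge (bigD K) u (K + 1) (fun j => ⟨min j (K + 1) - 1, by omega⟩)
    · intro j hj
      simp only [Finset.mem_Icc] at hj
      show bigd K u.val (min j (K + 1) - 1)
      unfold bigd circ
      split_ifs <;> first | trivial | omega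
    · intro j hj j' hj' h
      simp only [Finset.coe_Icc, Set.mem_Icc] at hj hj'
      have h3 : min j (K + 1) - 1 = min j' (K + 1) - 1 := congrArg Fin.val h
      omega

lemma bigD_indeg (K : ℕ) (u : Fin (4 * K + 3)) :
    K + 1 ≤ odeg (fun a b => bigD K b a) u := by
  have hu := u.isLt
  rcases lt_or_ge u.val (2 * K + 1) with h1 | h1
  · -- u in A : K predecessors in A plus x
    apply deg_ge _ u (K + 1) (fun j =>
      ⟨if j = K + 1 then 4 * K + 2 else
        if j ≤ u.val then u.val - j else u.val + (2 * K + 1) - j,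
       by split_ifs <;> omega⟩)
    · intro j hj
      simp only [Finset.mem_Icc] at hj
      show bigd K (if j = K + 1 then 4 * K + 2 else
        if j ≤ u.val then u.val - j else u.val + (2 * K + 1) - j) u.val
      unfold bigd circ
      split_ifs <;> first | trivial | omega
    · intro j hj j' hj' h
      simp only [Finset.coe_Icc, Set.mem_Icc] at hj hj'
      have h3 : (if j = K + 1 then 4 * K + 2 else
          if j ≤ u.val then u.val - j else u.val + (2 * K + 1) - j)
          = (if j' = K + 1 then 4 * K + 2 else
          if j' ≤ u.val then u.val - j' else u.val + (2 * K + 1) - j') :=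
        congrArg Fin.val h
      split_ifs at h3 <;> omega
  rcases lt_or_ge u.val (4 * K + 2) with h2 | h2
  · -- u in B : all of A dominates u
    apply deg_ge _ u (K + 1) (fun j => ⟨min j (K + 1) - 1, by omega⟩)
    · intro j hj
      simp only [Finset.mem_Icc] at hj
      show bigd K (min j (K + 1) - 1) u.val
      unfold bigd circ
      split_ifs <;> first | trivial | omega
    · intro j hj j' hj' h
      simp only [Finset.coe_Icc, Set.mem_Icc] at hj hj'
      have h3 : min j (K + 1) - 1 = min j' (K + 1) - 1 := congrArg Fin.val h
      omega
  · -- u = x : all of B dominates u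
    apply deg_ge _ u (K + 1) (fun j => ⟨2 * K + min j (K + 1), by omega⟩)
    · intro j hj
      simp only [Finset.mem_Icc] at hj
      show bigd K (2 * K + min j (K + 1)) u.val
      unfold bigd circ
      split_ifs <;> first | trivial | omega
    · intro j hj j' hj' h
      simp only [Finset.coe_Icc, Set.mem_Icc] at hj hj'
      have h3 : 2 * K + min j (K + 1) = 2 * K + min j' (K + 1) := congrArg Fin.val h
      omega

lemma bool_eq_of_ne {p q : Bool} (h : p ≠ q) : p = !q := by
  cases p <;> cases q <;> simp_all

lemma no_partition_core (K : ℕ) (P : Fin (4 * K + 3) → Bool) (b : Bool)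
    (hx : P ⟨4 * K + 2, by omega⟩ = b)
    (h2 : IsStrongOn (bigD K) {v | P v = !b})
    (h3 : IsStrong fun u v => bigD K u v ∧ P u ≠ P v) : False := by
  -- every vertex on the `!b` side avoids x
  have hV2notx : ∀ v : Fin (4 * K + 3), P v = !b → v.val < 4 * K + 2 := by
    intro v hv
    rcases lt_or_ge v.val (4 * K + 2) with h | h
    · exact h
    · exfalso
      have hvx : v = ⟨4 * K + 2, by omega⟩ :=
        Fin.ext (show v.val = 4 * K + 2 by have := v.isLt; omega)
      rw [hvx, hx] at hv
      exact absurd hv (by cases b <;> decide)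
  -- the `!b` side is nonempty
  have hne : ∃ v, P v = !b := by
    by_contra h
    push_neg at h
    have hcon : ∀ v, P v = b := fun v => by
      have := h v; cases hb : P v <;> cases b <;> simp_all
    have h0 := h3 ⟨0, by omega⟩ ⟨1, by omega⟩
    rw [Relation.reflTransGen_iff_eq (fun c hc => hc.2 (by rw [hcon, hcon]))] at h0
    have : (1 : ℕ) = 0 := congrArg Fin.val h0
    omega
  obtain ⟨w, hw⟩ := hne
  by_cases hcase : ∀ v : Fin (4 * K + 3), P v = !b → v.val < 2 * K + 1
  · -- the `!b` side is inside A; the vertex with value 2K+1 (in B) has no crossing out-arc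
    have hb0 : P ⟨2 * K + 1, by omega⟩ = b := by
      by_contra h
      have h' : P ⟨2 * K + 1, by omega⟩ = !b := bool_eq_of_ne h
      have := hcase _ h'
      simp at this
    have hw' := hcase w hw
    have hpath := h3 ⟨2 * K + 1, by omega⟩ w
    rw [Relation.reflTransGen_iff_eq ?_] at hpath
    · have : w.val = 2 * K + 1 := congrArg Fin.val hpath
      omega
    · rintro c ⟨hD, hP⟩
      have hc : P c = !b := by
        rw [hb0] at hP; exact bool_eq_of_ne (Ne.symm hP)
      have hcA := hcase c hc
      have hD' : bigd K (2 * K + 1) c.val := hD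
      unfold bigd circ at hD'
      split_ifs at hD' <;> omega
  · push_neg at hcase
    obtain ⟨c, hc, hcB⟩ := hcase
    have hcx := hV2notx c hc
    by_cases hA : ∃ a : Fin (4 * K + 3), P a = !b ∧ a.val < 2 * K + 1
    · -- `!b` side meets both A and B: no path from the B part to the A part inside it
      obtain ⟨a, ha, haA⟩ := hA
      have hpath := h2 c hc a ha
      have hinv : ∀ v, Relation.ReflTransGen
          (fun p q => bigD K p q ∧ p ∈ {v | P v = !b} ∧ q ∈ {v | P v = !b}) c v →
          2 * K + 1 ≤ v.val := by
        intro v hv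
        induction hv with
        | refl => omega
        | @tail p q _ hrel ih =>
          obtain ⟨hD, hm1, hm2⟩ := hrel
          have h4 : q.val < 4 * K + 2 := hV2notx _ hm2
          have h5 : p.val < 4 * K + 2 := hV2notx _ hm1
          have hD' : bigd K p.val q.val := hD
          unfold bigd circ at hD'
          split_ifs at hD' <;> omega
      have := hinv a hpath
      omega
    · -- `!b` side is inside B; vertex 0 (in A) has no crossing in-arc
      push_neg at hA
      have ha0 : P ⟨0, by omega⟩ = b := by
        by_contra h
        have h' : P ⟨0, by omega⟩ = !b := bool_eq_of_ne h
        have h0 := hA _ h'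
        rw [show ((⟨0, by omega⟩ : Fin (4 * K + 3))).val = 0 from rfl] at h0
        omega
      have hpath := h3 c ⟨0, by omega⟩
      rcases Relation.ReflTransGen.cases_tail hpath with heq | ⟨d, _, hD, hP⟩
      · have : (0 : ℕ) = c.val := congrArg Fin.val heq
        omega
      · have hd : P d = !b := by
          rw [ha0] at hP; exact bool_eq_of_ne hP
        have hdB : ¬ d.val < 2 * K + 1 := by
          have := hA d hd; omega
        have hdx := hV2notx d hd
        have hD' : bigd K d.val 0 := hD
        unfold bigd circ at hD'
        split_ifs at hD' <;> omega

end Stmt14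

/-- For every positive `K` there is a `K`-arc-connected tournament with no
bipartition `(V₁, V₂)` such that `D⟨V₁⟩`, `D⟨V₂⟩` and `D[V₁,V₂]` are all strong. -/
theorem stmt14 (K : ℕ) (hK : 1 ≤ K) :
    ∃ (n : ℕ) (D : Fin n → Fin n → Prop), IsTournament D ∧ IsKArcConnected D K ∧
      ¬ ∃ P : Fin n → Bool,
          IsStrongOn D {v | P v = true} ∧ IsStrongOn D {v | P v = false} ∧
          IsStrong (fun u v => D u v ∧ P u ≠ P v) := by
  refine ⟨4 * K + 3, Stmt14.bigD K, Stmt14.bigD_tournament K,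
    Stmt14.karc K (Stmt14.bigD K) (Stmt14.bigD_tournament K)
      (Stmt14.bigD_outdeg K) (Stmt14.bigD_indeg K), ?_⟩
  rintro ⟨P, h1, h2, h3⟩
  cases hb : P ⟨4 * K + 2, by omega⟩ with
  | true => exact Stmt14.no_partition_core K P true hb h2 h3
  | false => exact Stmt14.no_partition_core K P false hb h1 h3
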